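/- Let G be a graph without isolated vertices and let H be a connected component of G with e(H) < e(G) and q*(H) = 0. Then in every modularity-optimal partition of G, V(H) forms a single part. -/

import Mathlib

open Finset
open scoped Classical

noncomputable section

variable {V : Type*} [Fintype V]

/-- Number of edges between `A` and `B` (each cross edge counted once when `A`,`B` disjoint). -/
def ecut (G : SimpleGraph V) (A B : Finset V) : ℝ :=
  ((A ×ˢ B).filter fun p => G.Adj p.1 p.2).card

/-- Number of edges inside `A`. -/
def ein (G : SimpleGraph V) (A : Finset V) : ℝ := ecut G A A / 2

/-- Volume of a vertex set: sum of degrees. -/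
def gvol (G : SimpleGraph V) (A : Finset V) : ℝ := ∑ v ∈ A, (G.degree v : ℝ)

/-- Number of edges of `G`. -/
def edgecount (G : SimpleGraph V) : ℝ := (G.edgeFinset.card : ℝ)

/-- Conductance (Cheeger constant) `h_G`. -/
def conduct (G : SimpleGraph V) : ℝ :=
  sInf { x | ∃ A : Finset V, A.Nonempty ∧ A ≠ univ ∧
    x = ecut G A Aᶜ / min (gvol G A) (gvol G Aᶜ) }

/-- Expansion-by-products `ĥ_G`. -/
def hhat (G : SimpleGraph V) : ℝ :=
  sInf { x | ∃ A : Finset V, A.Nonempty ∧ A ≠ univ ∧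
    x = ecut G A Aᶜ * gvol G univ / (gvol G A * gvol G Aᶜ) }

/-- Modularity score of a vertex partition. -/
def modScore (G : SimpleGraph V) (P : Finpartition (univ : Finset V)) : ℝ :=
  (∑ A ∈ P.parts, ein G A) / edgecount G
    - (∑ A ∈ P.parts, (gvol G A) ^ 2) / (4 * (edgecount G) ^ 2)

/-- Modularity `q*(G)`: maximum modularity score over vertex partitions. -/
def modularity (G : SimpleGraph V) : ℝ :=
  sSup { x | ∃ P : Finpartition (univ : Finset V), x = modScore G P }

section Aux

variable (G : SimpleGraph V)

lemma ecut_nonneg (A B : Finset V) : 0 ≤ ecut G A B := Nat.cast_nonneg _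

lemma ein_nonneg (A : Finset V) : 0 ≤ ein G A :=
  div_nonneg (ecut_nonneg G A A) (by norm_num)

lemma gvol_nonneg (A : Finset V) : 0 ≤ gvol G A :=
  Finset.sum_nonneg fun v _ => Nat.cast_nonneg _

lemma ecut_eq_sum (A B : Finset V) :
    ecut G A B = ∑ a ∈ A, ((B.filter (G.Adj a)).card : ℝ) := by
  unfold ecut
  rw [← Nat.cast_sum]
  congr 1
  have h : (A ×ˢ B).filter (fun p => G.Adj p.1 p.2)
      = A.biUnion fun a => (B.filter (G.Adj a)).map ⟨fun b => (a, b), Prod.mk_right_injective a⟩ := by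
    ext ⟨x, y⟩
    simp only [mem_filter, mem_product, mem_biUnion, mem_map, Function.Embedding.coeFn_mk,
      Prod.mk.injEq]
    constructor
    · rintro ⟨⟨hx, hy⟩, h⟩; exact ⟨x, hx, y, ⟨hy, h⟩, rfl, rfl⟩
    · rintro ⟨a, ha, b, ⟨hb, h⟩, rfl, rfl⟩; exact ⟨⟨ha, hb⟩, h⟩
  rw [h, card_biUnion]
  · exact Finset.sum_congr rfl fun a _ => (card_map _)
  · intro x hx y hy hxy
    rw [Function.onFun, Finset.disjoint_left]
    rintro ⟨a, b⟩ h1 h2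
    simp only [mem_map, Function.Embedding.coeFn_mk, Prod.mk.injEq] at h1 h2
    obtain ⟨b1, -, rfl, -⟩ := h1
    obtain ⟨b2, -, h, -⟩ := h2
    exact hxy h.symm

lemma ecut_comm (A B : Finset V) : ecut G A B = ecut G B A := by
  unfold ecut
  congr 1
  refine Finset.card_bij' (fun p _ => (p.2, p.1)) (fun p _ => (p.2, p.1)) ?_ ?_ ?_ ?_ <;>
    rintro ⟨a, b⟩ hp <;> simp only [mem_filter, mem_product] at hp ⊢ <;>
    first
    | exact ⟨⟨hp.1.2, hp.1.1⟩, hp.2.symm⟩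
    | rfl

lemma ecut_union_left {A₁ A₂ : Finset V} (h : Disjoint A₁ A₂) (B : Finset V) :
    ecut G (A₁ ∪ A₂) B = ecut G A₁ B + ecut G A₂ B := by
  simp_rw [ecut_eq_sum]
  exact Finset.sum_union h

lemma ecut_union_right (A : Finset V) {B₁ B₂ : Finset V} (h : Disjoint B₁ B₂) :
    ecut G A (B₁ ∪ B₂) = ecut G A B₁ + ecut G A B₂ := by
  rw [ecut_comm, ecut_union_left G h, ecut_comm, ecut_comm G B₂]

lemma ecut_biUnion_left (T : Finset (Finset V)) (hT : (T : Set (Finset V)).PairwiseDisjoint id)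
    (B : Finset V) : ecut G (T.biUnion id) B = ∑ A ∈ T, ecut G A B := by
  simp_rw [ecut_eq_sum]
  exact Finset.sum_biUnion hT

lemma gvol_biUnion (T : Finset (Finset V)) (hT : (T : Set (Finset V)).PairwiseDisjoint id) :
    gvol G (T.biUnion id) = ∑ A ∈ T, gvol G A := by
  unfold gvol
  exact Finset.sum_biUnion hT

lemma gvol_union {A₁ A₂ : Finset V} (h : Disjoint A₁ A₂) :
    gvol G (A₁ ∪ A₂) = gvol G A₁ + gvol G A₂ := Finset.sum_union h

lemma gvol_eq_ecut_univ (A : Finset V) : gvol G A = ecut G A univ := by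
  rw [ecut_eq_sum]
  unfold gvol
  refine Finset.sum_congr rfl fun v _ => ?_
  congr 1
  show G.degree v = _
  unfold SimpleGraph.degree
  congr 1
  ext w
  simp

lemma ein_union {A₁ A₂ : Finset V} (h : Disjoint A₁ A₂) :
    ein G (A₁ ∪ A₂) = ein G A₁ + ein G A₂ + ecut G A₁ A₂ := by
  unfold ein
  rw [ecut_union_left G h, ecut_union_right G _ h, ecut_union_right G _ h,
    ecut_comm G A₂ A₁]
  ring

lemma ecut_eq_zero {A B : Finset V} (h : ∀ a ∈ A, ∀ b ∈ B, ¬ G.Adj a b) :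
    ecut G A B = 0 := by
  unfold ecut
  norm_cast
  rw [Finset.card_eq_zero, Finset.filter_eq_empty_iff]
  rintro ⟨a, b⟩ hab
  rw [mem_product] at hab
  exact h a hab.1 b hab.2

lemma gvol_univ : gvol G univ = 2 * edgecount G := by
  unfold gvol edgecount
  rw [← Nat.cast_sum]
  norm_cast
  exact G.sum_degrees_eq_twice_card_edges

lemma gvol_pos (hiso : ∀ v : V, 0 < G.degree v) {A : Finset V} (hA : A.Nonempty) :
    0 < gvol G A :=
  Finset.sum_pos (fun v _ => by exact_mod_cast hiso v) hA

end Aux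

def pScore (G : SimpleGraph V) (A : Finset V) : ℝ :=
  ein G A / edgecount G - gvol G A ^ 2 / (4 * edgecount G ^ 2)

lemma modScore_eq_sum (G : SimpleGraph V) (P : Finpartition (univ : Finset V)) :
    modScore G P = ∑ A ∈ P.parts, pScore G A := by
  unfold modScore pScore
  rw [Finset.sum_div, Finset.sum_div, ← Finset.sum_sub_distrib]

lemma bddAbove_modset (G : SimpleGraph V) :
    BddAbove {x | ∃ P : Finpartition (univ : Finset V), x = modScore G P} := by
  have h1 : {x | ∃ P : Finpartition (univ : Finset V), x = modScore G P}
      = Set.range (modScore G) := by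
    ext x
    constructor
    · rintro ⟨P, rfl⟩; exact ⟨P, rfl⟩
    · rintro ⟨P, rfl⟩; exact ⟨P, rfl⟩
  have : Finite (Finpartition (univ : Finset V)) :=
    Finite.of_injective Finpartition.parts fun P Q h => Finpartition.ext h
  rw [h1]
  exact (Set.finite_range _).bddAbove

lemma modScore_le (G : SimpleGraph V) (P : Finpartition (univ : Finset V)) :
    modScore G P ≤ modularity G :=
  le_csSup (bddAbove_modset G) ⟨P, rfl⟩

section Induce

variable {G : SimpleGraph V} {S : Finset V}

lemma degree_induce (hcl : ∀ ⦃v w : V⦄, v ∈ S → G.Adj v w → w ∈ S) (a : ↥(S : Set V)) :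
    (G.induce (S : Set V)).degree a = G.degree (a : V) := by
  unfold SimpleGraph.degree
  refine Finset.card_bij (fun w _ => (w : V)) ?_ ?_ ?_
  · intro w hw
    rw [SimpleGraph.mem_neighborFinset] at hw ⊢
    exact hw
  · intro w _ w' _ h
    exact Subtype.ext h
  · intro b hb
    rw [SimpleGraph.mem_neighborFinset] at hb
    have hbS : b ∈ S := hcl (by exact_mod_cast a.2) hb
    exact ⟨⟨b, by exact_mod_cast hbS⟩, by rw [SimpleGraph.mem_neighborFinset]; exact hb, rfl⟩

lemma ecut_induce (A' B' : Finset ↥(S : Set V)) :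
    ecut (G.induce (S : Set V)) A' B'
      = ecut G (A'.image Subtype.val) (B'.image Subtype.val) := by
  unfold ecut
  congr 1
  refine Finset.card_bij (fun p _ => ((p.1 : V), (p.2 : V))) ?_ ?_ ?_
  · rintro ⟨a, b⟩ hp
    simp only [mem_filter, mem_product, mem_image] at hp ⊢
    exact ⟨⟨⟨a, hp.1.1, rfl⟩, ⟨b, hp.1.2, rfl⟩⟩, hp.2⟩
  · rintro ⟨a, b⟩ _ ⟨a', b'⟩ _ h
    simp only [Prod.mk.injEq] at h
    exact Prod.ext (Subtype.ext h.1) (Subtype.ext h.2)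
  · rintro ⟨a, b⟩ hp
    simp only [mem_filter, mem_product, mem_image] at hp
    obtain ⟨⟨⟨a', ha', rfl⟩, ⟨b', hb', rfl⟩⟩, hadj⟩ := hp
    exact ⟨(a', b'), by simp only [mem_filter, mem_product]; exact ⟨⟨ha', hb'⟩, hadj⟩, rfl⟩

lemma ein_induce (A' : Finset ↥(S : Set V)) :
    ein (G.induce (S : Set V)) A' = ein G (A'.image Subtype.val) := by
  unfold ein
  rw [ecut_induce]

lemma gvol_induce (hcl : ∀ ⦃v w : V⦄, v ∈ S → G.Adj v w → w ∈ S) (A' : Finset ↥(S : Set V)) :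
    gvol (G.induce (S : Set V)) A' = gvol G (A'.image Subtype.val) := by
  unfold gvol
  rw [Finset.sum_image (fun a _ b _ h => Subtype.ext h)]
  exact Finset.sum_congr rfl fun a _ => by exact_mod_cast degree_induce hcl a

lemma image_univ_val : (univ : Finset ↥(S : Set V)).image Subtype.val = S := by
  ext x
  simp

lemma gvol_S (hcl : ∀ ⦃v w : V⦄, v ∈ S → G.Adj v w → w ∈ S) :
    gvol G S = 2 * ein G S := by
  rw [gvol_eq_ecut_univ]
  have huniv : (univ : Finset V) = S ∪ Sᶜ := (Finset.union_compl S).symm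
  rw [huniv, ecut_union_right G S disjoint_compl_right]
  have h0 : ecut G S Sᶜ = 0 :=
    ecut_eq_zero G fun a ha b hb hadj => absurd (hcl ha hadj) (Finset.mem_compl.1 hb)
  unfold ein
  rw [h0]
  ring

lemma edgecount_induce (hcl : ∀ ⦃v w : V⦄, v ∈ S → G.Adj v w → w ∈ S) :
    edgecount (G.induce (S : Set V)) = ein G S := by
  have h1 := gvol_univ (G.induce (S : Set V))
  have h2 : gvol (G.induce (S : Set V)) univ = gvol G S := by
    rw [gvol_induce hcl, image_univ_val]
  have h3 := gvol_S hcl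
  linarith

end Induce


lemma key_ineq {G : SimpleGraph V} {S : Finset V}
    (hcl : ∀ ⦃v w : V⦄, v ∈ S → G.Adj v w → w ∈ S)
    (hq : modularity (G.induce (S : Set V)) = 0)
    (heS : 0 < ein G S)
    {B : Finset V} (hBS : B ⊆ S) (hB : B.Nonempty) (hBne : B ≠ S) :
    gvol G B * gvol G (S \ B) ≤ ecut G B (S \ B) * gvol G S := by
  set s : Set V := (S : Set V) with hs
  letI : DecidableEq ↥s := fun a b => Classical.propDecidable (a = b)
  set A' : Finset ↥s := univ.filter (fun a => (a : V) ∈ B) with hA'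
  have hA'img : A'.image Subtype.val = B := by
    ext x
    simp only [hA', mem_image, mem_filter, mem_univ, true_and]
    constructor
    · rintro ⟨a, ha, rfl⟩; exact ha
    · intro hx; exact ⟨⟨x, by exact_mod_cast hBS hx⟩, hx, rfl⟩
  have hA'cimg : (A'ᶜ).image Subtype.val = S \ B := by
    ext x
    simp only [hA', mem_image, mem_compl, mem_filter, mem_univ, true_and, mem_sdiff]
    constructor
    · rintro ⟨a, ha, rfl⟩; exact ⟨by exact_mod_cast a.2, ha⟩
    · rintro ⟨hxS, hxB⟩; exact ⟨⟨x, by exact_mod_cast hxS⟩, hxB, rfl⟩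
  have hA'ne : A'.Nonempty := by
    obtain ⟨b, hb⟩ := hB
    exact ⟨⟨b, by exact_mod_cast hBS hb⟩, by simp [hA', hb]⟩
  have hA'cne : A'ᶜ.Nonempty := by
    obtain ⟨x, hxS, hxB⟩ := Finset.exists_of_ssubset (Finset.ssubset_iff_subset_ne.2 ⟨hBS, hBne⟩)
    exact ⟨⟨x, by exact_mod_cast hxS⟩, by simp [hA', hxB]⟩
  have hA'neq : A' ≠ A'ᶜ := by
    intro h
    obtain ⟨a, ha⟩ := hA'ne
    have : a ∈ A'ᶜ := h ▸ ha
    exact (Finset.mem_compl.1 this) ha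
  have hsupIndep : ({A', A'ᶜ} : Finset (Finset ↥s)).SupIndep id := by
    rw [Finset.supIndep_iff_pairwiseDisjoint]
    rw [coe_insert, coe_singleton, Set.pairwiseDisjoint_insert]
    refine ⟨Set.pairwiseDisjoint_singleton _ _, ?_⟩
    rintro j hj -
    rw [Set.mem_singleton_iff] at hj
    subst hj
    exact disjoint_compl_right
  have hsup : ({A', A'ᶜ} : Finset (Finset ↥s)).sup id = univ := by
    rw [Finset.sup_insert, Finset.sup_singleton, id_eq]
    rw [Finset.sup_eq_union]
    exact Finset.union_compl A'
  set Q : Finpartition (univ : Finset ↥s) := Finpartition.ofErase _ hsupIndep hsup with hQ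
  have hQparts : Q.parts = {A', A'ᶜ} := by
    show ({A', A'ᶜ} : Finset (Finset ↥s)).erase ⊥ = {A', A'ᶜ}
    apply Finset.erase_eq_of_notMem
    intro h
    rcases Finset.mem_insert.1 h with h | h
    · exact hA'ne.ne_empty h.symm
    · exact hA'cne.ne_empty (Finset.mem_singleton.1 h).symm
  have hscore : modScore (G.induce s) Q ≤ 0 := hq ▸ modScore_le (G.induce s) Q
  rw [modScore_eq_sum, hQparts, Finset.sum_pair hA'neq] at hscore
  unfold pScore at hscore
  rw [ein_induce, ein_induce, gvol_induce hcl, gvol_induce hcl, edgecount_induce hcl,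
    hA'img, hA'cimg] at hscore
  set M := ein G S with hMdef
  set e := ecut G B (S \ B) with hedef
  set x := gvol G B with hxdef
  set y := gvol G (S \ B) with hydef
  have hM0 : 0 < M := heS
  have hunion : B ∪ S \ B = S := Finset.union_sdiff_of_subset hBS
  have h1 : ein G B + ein G (S \ B) + e = M := by
    have h := ein_union G (Finset.disjoint_sdiff (s := B) (t := S))
    rw [hunion] at h
    rw [hMdef, hedef]
    linarith [h]
  have h2 : x + y = 2 * M := by
    have h := gvol_union G (Finset.disjoint_sdiff (s := B) (t := S))
    rw [hunion] at h
    have h3 := gvol_S hcl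
    rw [hxdef, hydef, hMdef]
    linarith [h, h3]
  have hgS : gvol G S = 2 * M := by rw [hMdef]; exact gvol_S hcl
  rw [hgS]
  have hscore' : (M - e) / M - (x ^ 2 + y ^ 2) / (4 * M ^ 2) ≤ 0 := by
    have hein : ein G B / M + ein G (S \ B) / M = (M - e) / M := by
      rw [← add_div]
      congr 1
      linarith [h1]
    have hsplit : x ^ 2 / (4 * M ^ 2) + y ^ 2 / (4 * M ^ 2) = (x ^ 2 + y ^ 2) / (4 * M ^ 2) :=
      (add_div _ _ _).symm
    linarith [hscore, hein, hsplit]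
  have hineq : (M - e) * (4 * M ^ 2) ≤ (x ^ 2 + y ^ 2) * M := by
    rw [sub_nonpos, div_le_div_iff₀ hM0 (by positivity)] at hscore'
    exact hscore'
  have hxy : x * y * (2 * M) ≤ e * (2 * M) * (2 * M) := by
    have h3 : x ^ 2 + y ^ 2 = 4 * M ^ 2 - 2 * (x * y) := by
      linear_combination (x + y + 2 * M) * h2
    have h4 : (x ^ 2 + y ^ 2) * M = 4 * M ^ 3 - 2 * (x * y) * M := by rw [h3]; ring
    nlinarith [hineq, h4]
  exact le_of_mul_le_mul_right hxy (by positivity)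

set_option maxHeartbeats 1000000

/-- If `G` has no isolated vertices and `H` is a connected component of `G`
(vertex set `S`) with `e(H) < e(G)` and `q*(H) = 0`, then `V(H)` is a part of every
modularity-optimal partition of `G`. -/
theorem stmt14 {V : Type*} [Fintype V] (G : SimpleGraph V)
    (hiso : ∀ v : V, 0 < G.degree v)
    (c : G.ConnectedComponent) (S : Finset V)
    (hS : S = univ.filter fun v => G.connectedComponentMk v = c)
    (hlt : ein G S < edgecount G)
    (hq : modularity (G.induce (S : Set V)) = 0) :
    ∀ P : Finpartition (univ : Finset V), modScore G P = modularity G →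
      S ∈ P.parts := by
  intro P hP
  by_contra hSP
  have hm : 0 < edgecount G := lt_of_le_of_lt (ein_nonneg G S) hlt
  have hMne : edgecount G ≠ 0 := ne_of_gt hm
  have hcl : ∀ ⦃v w : V⦄, v ∈ S → G.Adj v w → w ∈ S := by
    intro v w hv hadj
    rw [hS, mem_filter] at hv ⊢
    refine ⟨mem_univ w, ?_⟩
    rw [← hv.2]
    exact SimpleGraph.ConnectedComponent.sound hadj.symm.reachable
  have hSne : S.Nonempty := by
    obtain ⟨v, hv⟩ := (SimpleGraph.ConnectedComponent.exists (p := fun d => d = c)).1 ⟨c, rfl⟩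
    exact ⟨v, by rw [hS, mem_filter]; exact ⟨mem_univ v, hv⟩⟩
  have hPd := P.disjoint
  by_cases hstr : ∀ A ∈ P.parts, A ⊆ S ∨ Disjoint A S
  · -- no straddling part: merge all parts inside S into S
    set T := P.parts.filter (fun B => B ⊆ S) with hT
    have hTsub : T ⊆ P.parts := filter_subset _ _
    have hTd : (T : Set (Finset V)).PairwiseDisjoint id := hPd.subset (by exact_mod_cast hTsub)
    have hTU : T.biUnion id = S := by
      apply Finset.Subset.antisymm
      · intro x hx
        rw [Finset.mem_biUnion] at hx
        obtain ⟨B, hB, hxB⟩ := hx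
        exact (Finset.mem_filter.1 hB).2 hxB
      · intro v hv
        obtain ⟨B, hB, hvB⟩ := P.exists_mem (mem_univ v)
        have hBsub : B ⊆ S := by
          rcases hstr B hB with h | h
          · exact h
          · exact absurd hv (Finset.disjoint_left.1 h hvB)
        exact Finset.mem_biUnion.2 ⟨B, Finset.mem_filter.2 ⟨hB, hBsub⟩, hvB⟩
    have hTne : T.Nonempty := by
      obtain ⟨v, hv⟩ := hSne
      rw [← hTU, Finset.mem_biUnion] at hv
      obtain ⟨B, hB, -⟩ := hv
      exact ⟨B, hB⟩
    have hSdT : ∀ B ∈ P.parts \ T, Disjoint B S := by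
      intro B hB
      rw [Finset.mem_sdiff] at hB
      rcases hstr B hB.1 with h | h
      · exact absurd (show B ∈ T by rw [hT, Finset.mem_filter]; exact ⟨hB.1, h⟩) hB.2
      · exact h
    have hSnotin : S ∉ P.parts \ T := fun h => hSP (Finset.mem_sdiff.1 h).1
    have hsup' : (insert S (P.parts \ T)).sup id = univ := by
      rw [Finset.sup_insert, id_eq]
      have h := P.sup_parts
      rw [← Finset.sdiff_union_of_subset hTsub, Finset.sup_union] at h
      have h2 : T.sup id = S := by rw [Finset.sup_eq_biUnion]; exact hTU
      rw [h2] at h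
      rw [sup_comm]
      exact h
    have hsupIndep' : (insert S (P.parts \ T)).SupIndep id := by
      rw [Finset.supIndep_iff_pairwiseDisjoint, coe_insert, Set.pairwiseDisjoint_insert]
      refine ⟨hPd.subset (by exact_mod_cast Finset.sdiff_subset), ?_⟩
      intro j hj _
      exact (hSdT j (by exact_mod_cast hj)).symm
    have hbot' : ⊥ ∉ insert S (P.parts \ T) := by
      rw [Finset.mem_insert]
      rintro (h | h)
      · exact hSne.ne_empty h.symm
      · exact P.bot_notMem (Finset.sdiff_subset h)
    set P' : Finpartition (univ : Finset V) := ⟨insert S (P.parts \ T), hsupIndep', hsup', hbot'⟩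
      with hP'def
    have hscoreP' : modScore G P' ≤ modScore G P := hP ▸ modScore_le G P'
    rw [modScore_eq_sum, modScore_eq_sum] at hscoreP'
    have hsum' : ∑ A ∈ P'.parts, pScore G A = pScore G S + ∑ A ∈ P.parts \ T, pScore G A := by
      show ∑ A ∈ insert S (P.parts \ T), pScore G A = _
      rw [Finset.sum_insert hSnotin]
    have hsumP : ∑ A ∈ P.parts, pScore G A
        = ∑ A ∈ P.parts \ T, pScore G A + ∑ A ∈ T, pScore G A :=
      (Finset.sum_sdiff hTsub).symm
    have heS : 0 < ein G S := by
      have h1 := gvol_pos G hiso hSne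
      have h2 := gvol_S hcl
      linarith
    -- edge identity
    have hI : 2 * ein G S = 2 * (∑ B ∈ T, ein G B) + ∑ B ∈ T, ecut G B (S \ B) := by
      have h := ecut_biUnion_left G T hTd S
      rw [hTU] at h
      have h2 : ∀ B ∈ T, ecut G B S = 2 * ein G B + ecut G B (S \ B) := by
        intro B hB
        have hBsub : B ⊆ S := (Finset.mem_filter.1 hB).2
        have h3 : ecut G B S = ecut G B B + ecut G B (S \ B) := by
          conv_lhs => rw [← Finset.union_sdiff_of_subset hBsub]
          exact ecut_union_right G B Finset.disjoint_sdiff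
        have h4 : ecut G B B = 2 * ein G B := by unfold ein; ring
        rw [h3, h4]
      rw [Finset.sum_congr rfl h2, Finset.sum_add_distrib, ← Finset.mul_sum] at h
      have h5 : ecut G S S = 2 * ein G S := by unfold ein; ring
      rw [h5] at h
      exact h
    -- volume identities
    have hvol : gvol G S = ∑ B ∈ T, gvol G B := by
      conv_lhs => rw [← hTU]
      exact gvol_biUnion G T hTd
    have hy : ∀ B ∈ T, gvol G (S \ B) = gvol G S - gvol G B := by
      intro B hB
      have hBsub : B ⊆ S := (Finset.mem_filter.1 hB).2
      have h := gvol_union G (Finset.disjoint_sdiff (s := B) (t := S))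
      rw [Finset.union_sdiff_of_subset hBsub] at h
      linarith
    have hsq : gvol G S ^ 2
        = ∑ B ∈ T, gvol G B ^ 2 + ∑ B ∈ T, gvol G B * gvol G (S \ B) := by
      have h1 : ∑ B ∈ T, gvol G B * gvol G (S \ B)
          = ∑ B ∈ T, (gvol G S * gvol G B - gvol G B ^ 2) := by
        refine Finset.sum_congr rfl fun B hB => ?_
        rw [hy B hB]
        ring
      rw [h1, Finset.sum_sub_distrib, ← Finset.mul_sum, ← hvol]
      ring
    have hdiff : pScore G S - ∑ B ∈ T, pScore G B
        = ∑ B ∈ T, (ecut G B (S \ B) / (2 * edgecount G)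
            - gvol G B * gvol G (S \ B) / (4 * edgecount G ^ 2)) := by
      have hsumT : ∑ B ∈ T, pScore G B
          = (∑ B ∈ T, ein G B) / edgecount G
            - (∑ B ∈ T, gvol G B ^ 2) / (4 * edgecount G ^ 2) := by
        unfold pScore
        rw [Finset.sum_sub_distrib, Finset.sum_div, Finset.sum_div]
      have hRHS : ∑ B ∈ T, (ecut G B (S \ B) / (2 * edgecount G)
            - gvol G B * gvol G (S \ B) / (4 * edgecount G ^ 2))
          = (∑ B ∈ T, ecut G B (S \ B)) / (2 * edgecount G)
            - (∑ B ∈ T, gvol G B * gvol G (S \ B)) / (4 * edgecount G ^ 2) := by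
        rw [Finset.sum_sub_distrib, Finset.sum_div, Finset.sum_div]
      rw [hsumT, hRHS]
      unfold pScore
      rw [hsq]
      have hES : ein G S = (∑ B ∈ T, ein G B) + (∑ B ∈ T, ecut G B (S \ B)) / 2 := by
        linarith [hI]
      rw [hES]
      field_simp
      ring
    have hterm : ∀ B ∈ T, 0 < ecut G B (S \ B) / (2 * edgecount G)
        - gvol G B * gvol G (S \ B) / (4 * edgecount G ^ 2) := by
      intro B hB
      have hBmem := hTsub hB
      have hBsub : B ⊆ S := (Finset.mem_filter.1 hB).2
      have hBneS : B ≠ S := fun h => hSP (h ▸ hBmem)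
      have hBnonempty : B.Nonempty := P.nonempty_of_mem_parts hBmem
      have hkey := key_ineq hcl hq heS hBsub hBnonempty hBneS
      rw [gvol_S hcl] at hkey
      have hx : 0 < gvol G B := gvol_pos G hiso hBnonempty
      have hSBne : (S \ B).Nonempty :=
        Finset.sdiff_nonempty.2 fun h => hBneS (Finset.Subset.antisymm hBsub h)
      have hyy : 0 < gvol G (S \ B) := gvol_pos G hiso hSBne
      have he0 : 0 < ecut G B (S \ B) := by nlinarith [hkey, mul_pos hx hyy, heS]
      have hnum : 0 < 2 * edgecount G * ecut G B (S \ B) - gvol G B * gvol G (S \ B) := by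
        nlinarith [hkey, hlt, he0, heS]
      have heq : ecut G B (S \ B) / (2 * edgecount G)
            - gvol G B * gvol G (S \ B) / (4 * edgecount G ^ 2)
          = (2 * edgecount G * ecut G B (S \ B) - gvol G B * gvol G (S \ B))
            / (4 * edgecount G ^ 2) := by
        field_simp
        ring
      rw [heq]
      exact div_pos hnum (by positivity)
    have hpos := Finset.sum_pos hterm hTne
    linarith [hscoreP', hsum', hsumP, hdiff, hpos]
  · -- some part straddles S and its complement: split it
    push_neg at hstr
    obtain ⟨A, hA, hAnsub, hAndisj⟩ := hstr
    set A₁ := A ∩ S with hA₁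
    set A₂ := A \ S with hA₂
    have h1ne : A₁.Nonempty := Finset.not_disjoint_iff_nonempty_inter.1 hAndisj
    have h2ne : A₂.Nonempty := Finset.sdiff_nonempty.2 hAnsub
    have hunion : A₁ ∪ A₂ = A := by
      rw [hA₁, hA₂, union_comm]
      exact Finset.sdiff_union_inter A S
    have hdisj12 : Disjoint A₁ A₂ := by
      rw [Finset.disjoint_left]
      intro x hx1 hx2
      exact (Finset.mem_sdiff.1 hx2).2 (Finset.mem_inter.1 hx1).2
    have h1sub : A₁ ⊆ A := Finset.inter_subset_left
    have h2sub : A₂ ⊆ A := Finset.sdiff_subset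
    have hdAj : ∀ j ∈ P.parts.erase A, Disjoint A j := fun j hj =>
      hPd (Finset.mem_coe.2 hA) (Finset.mem_coe.2 (Finset.mem_of_mem_erase hj))
        (Finset.ne_of_mem_erase hj).symm
    have hnotinerase : ∀ {C : Finset V}, C ⊆ A → C.Nonempty → C ∉ P.parts.erase A := by
      intro C hCA hCne hC
      obtain ⟨x, hx⟩ := hCne
      exact Finset.disjoint_left.1 (hdAj C hC).symm hx (hCA hx)
    have h1note := hnotinerase h1sub h1ne
    have h2note := hnotinerase h2sub h2ne
    have h12 : A₁ ≠ A₂ := by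
      intro h
      obtain ⟨x, hx⟩ := h1ne
      exact Finset.disjoint_left.1 hdisj12 hx (h ▸ hx)
    have hsup' : (insert A₁ (insert A₂ (P.parts.erase A))).sup id = univ := by
      rw [Finset.sup_insert, Finset.sup_insert, id_eq, id_eq, ← sup_assoc]
      have h := P.sup_parts
      conv at h => rw [← Finset.insert_erase hA]
      rw [Finset.sup_insert, id_eq] at h
      have hAA : A₁ ⊔ A₂ = A := by rw [Finset.sup_eq_union]; exact hunion
      rw [hAA]
      exact h
    have hsupIndep' : (insert A₁ (insert A₂ (P.parts.erase A))).SupIndep id := by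
      rw [Finset.supIndep_iff_pairwiseDisjoint, coe_insert, coe_insert,
        Set.pairwiseDisjoint_insert, Set.pairwiseDisjoint_insert]
      refine ⟨⟨hPd.subset (by exact_mod_cast Finset.erase_subset _ _), ?_⟩, ?_⟩
      · intro j hj _
        exact (hdAj j (by exact_mod_cast hj)).mono_left h2sub
      · intro j hj _
        rcases Set.mem_insert_iff.1 hj with h | h
        · subst h; exact hdisj12
        · exact (hdAj j (by exact_mod_cast h)).mono_left h1sub
    have hbot' : ⊥ ∉ insert A₁ (insert A₂ (P.parts.erase A)) := by
      rw [Finset.mem_insert, Finset.mem_insert]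
      rintro (h | h | h)
      · exact h1ne.ne_empty h.symm
      · exact h2ne.ne_empty h.symm
      · exact P.bot_notMem (Finset.mem_of_mem_erase h)
    set P' : Finpartition (univ : Finset V) :=
      ⟨insert A₁ (insert A₂ (P.parts.erase A)), hsupIndep', hsup', hbot'⟩ with hP'def
    have hscoreP' : modScore G P' ≤ modScore G P := hP ▸ modScore_le G P'
    rw [modScore_eq_sum, modScore_eq_sum] at hscoreP'
    have h1notin : A₁ ∉ insert A₂ (P.parts.erase A) := by
      rw [Finset.mem_insert]
      rintro (h | h)
      · exact h12 h
      · exact h1note h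
    have hsum' : ∑ B ∈ P'.parts, pScore G B
        = pScore G A₁ + (pScore G A₂ + ∑ B ∈ P.parts.erase A, pScore G B) := by
      show ∑ B ∈ insert A₁ (insert A₂ (P.parts.erase A)), pScore G B = _
      rw [Finset.sum_insert h1notin, Finset.sum_insert h2note]
    have hsumP : ∑ B ∈ P.parts, pScore G B
        = pScore G A + ∑ B ∈ P.parts.erase A, pScore G B := by
      conv_lhs => rw [← Finset.insert_erase hA]
      rw [Finset.sum_insert (Finset.notMem_erase _ _)]
    have heinA : ein G A = ein G A₁ + ein G A₂ := by
      have h := ein_union G hdisj12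
      rw [hunion] at h
      have hcut0 : ecut G A₁ A₂ = 0 :=
        ecut_eq_zero G fun a ha b hb hadj =>
          (Finset.mem_sdiff.1 hb).2 (hcl (Finset.mem_inter.1 ha).2 hadj)
      rw [hcut0] at h
      linarith
    have hvolA : gvol G A = gvol G A₁ + gvol G A₂ := by
      have h := gvol_union G hdisj12
      rw [hunion] at h
      exact h
    have hx1 : 0 < gvol G A₁ := gvol_pos G hiso h1ne
    have hx2 : 0 < gvol G A₂ := gvol_pos G hiso h2ne
    have hgain : pScore G A₁ + pScore G A₂ - pScore G A
        = 2 * (gvol G A₁ * gvol G A₂) / (4 * edgecount G ^ 2) := by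
      unfold pScore
      rw [heinA, hvolA]
      have e1 : ein G A₁ / edgecount G + ein G A₂ / edgecount G
          = (ein G A₁ + ein G A₂) / edgecount G := (add_div _ _ _).symm
      have e2 : (gvol G A₁ + gvol G A₂) ^ 2 / (4 * edgecount G ^ 2)
            - gvol G A₁ ^ 2 / (4 * edgecount G ^ 2) - gvol G A₂ ^ 2 / (4 * edgecount G ^ 2)
          = 2 * (gvol G A₁ * gvol G A₂) / (4 * edgecount G ^ 2) := by
        rw [div_sub_div_same, div_sub_div_same]
        congr 1
        ring
      linarith
    have hgainpos : 0 < 2 * (gvol G A₁ * gvol G A₂) / (4 * edgecount G ^ 2) := by positivity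
    linarith [hscoreP', hsum', hsumP, hgain, hgainpos]
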